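/- Let S be a nice hole (a BLS-hole with no left notches), L(S) its unique leftmost edge and R(S) its unique rightmost edge. Traversing the lower boundary FB(S) (the anticlockwise path from L(S) to R(S)) edge by edge starting at L(S), the edges e are visited in non-decreasing order of x_min(e); the same holds for the upper boundary FT(S) (the clockwise path from L(S) to R(S)). -/

import Mathlib

open Set

/-- A clockwise-oriented simple rectilinear polygon with `n + 1` vertices,
listed in the order of a clockwise traversal of its boundary. -/
structure RectPolygon (n : ℕ) where
  v : Fin (n + 1) → ℝ × ℝ
  inj : Function.Injective v
  axis : ∀ i : Fin (n + 1), (v i).1 = (v (i + 1)).1 ∨ (v i).2 = (v (i + 1)).2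
  nondegen : ∀ i : Fin (n + 1), v i ≠ v (i + 1)
  alternate : ∀ i : Fin (n + 1), ((v i).1 = (v (i + 1)).1) ↔ ¬((v (i + 1)).1 = (v (i + 2)).1)
  simple : ∀ i j : Fin (n + 1), j ≠ i → j ≠ i + 1 → j + 1 ≠ i →
      Disjoint (segment ℝ (v i) (v (i + 1))) (segment ℝ (v j) (v (j + 1)))
  clockwise : (∑ i : Fin (n + 1), ((v i).1 * (v (i + 1)).2 - (v (i + 1)).1 * (v i).2)) < 0

/-- Clockwise distance from edge `s` to edge `i` (cyclically). -/
def cpos {m : ℕ} (s i : Fin m) : ℕ := ((i - s : Fin m) : ℕ)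

namespace RectPolygon

variable {n : ℕ} (P : RectPolygon n)

/-- The `i`-th boundary edge, from vertex `i` to vertex `i+1`. -/
def edge (i : Fin (n + 1)) : Set (ℝ × ℝ) := segment ℝ (P.v i) (P.v (i + 1))

/-- The boundary of the polygon: a closed rectilinear arc. -/
def boundary : Set (ℝ × ℝ) := ⋃ i, P.edge i

def Horiz (i : Fin (n + 1)) : Prop := (P.v i).2 = (P.v (i + 1)).2
def Vert (i : Fin (n + 1)) : Prop := (P.v i).1 = (P.v (i + 1)).1

/-- Clockwise-rightward edge. -/
def Rightward (i : Fin (n + 1)) : Prop := P.Horiz i ∧ (P.v i).1 < (P.v (i + 1)).1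
/-- Clockwise-leftward edge. -/
def Leftward (i : Fin (n + 1)) : Prop := P.Horiz i ∧ (P.v (i + 1)).1 < (P.v i).1
def Upward (i : Fin (n + 1)) : Prop := P.Vert i ∧ (P.v i).2 < (P.v (i + 1)).2
def Downward (i : Fin (n + 1)) : Prop := P.Vert i ∧ (P.v (i + 1)).2 < (P.v i).2

/-- A leftmost edge: a vertical edge whose two neighbouring horizontal edges lie to its
right and with the interior of the hole to its right (in clockwise convention: an upward
edge preceded by a leftward edge and followed by a rightward edge). -/
def LeftmostEdge (i : Fin (n + 1)) : Prop := P.Upward i ∧ P.Leftward (i - 1) ∧ P.Rightward (i + 1)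
/-- A right notch: a vertical edge whose two neighbouring horizontal edges lie to its right
but with the interior of the hole to its left. -/
def RightNotch (i : Fin (n + 1)) : Prop := P.Downward i ∧ P.Leftward (i - 1) ∧ P.Rightward (i + 1)
/-- A rightmost edge. -/
def RightmostEdge (i : Fin (n + 1)) : Prop := P.Downward i ∧ P.Rightward (i - 1) ∧ P.Leftward (i + 1)
/-- A left notch. -/
def LeftNotch (i : Fin (n + 1)) : Prop := P.Upward i ∧ P.Rightward (i - 1) ∧ P.Leftward (i + 1)
/-- A topmost edge. -/
def TopmostEdge (i : Fin (n + 1)) : Prop := P.Rightward i ∧ P.Upward (i - 1) ∧ P.Downward (i + 1)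
/-- A top notch. -/
def TopNotch (i : Fin (n + 1)) : Prop := P.Rightward i ∧ P.Downward (i - 1) ∧ P.Upward (i + 1)

/-- A falling corner at vertex `v (i + 1)`: preceding edge downward, succeeding edge rightward. -/
def FallingCornerAt (i : Fin (n + 1)) : Prop := P.Downward i ∧ P.Rightward (i + 1)

/-- A BLS-hole: no right notches, no top notches, and at most one falling corner. -/
def BLS : Prop := (∀ i, ¬ P.RightNotch i) ∧ (∀ i, ¬ P.TopNotch i) ∧
  (∀ i j, P.FallingCornerAt i → P.FallingCornerAt j → i = j)

/-- A nice hole: a BLS-hole without left notches. -/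
def Nice : Prop := P.BLS ∧ ∀ i, ¬ P.LeftNotch i

/-- The closed region bounded by the polygon: boundary plus inner (bounded) region. -/
def region : Set (ℝ × ℝ) :=
  P.boundary ∪ {p | p ∉ P.boundary ∧ Bornology.IsBounded (connectedComponentIn P.boundaryᶜ p)}

def xMinEdge (i : Fin (n + 1)) : ℝ := min (P.v i).1 (P.v (i + 1)).1

/-- Point on edge `i` at parameter `t ∈ [0,1]`. -/
def ptOn (i : Fin (n + 1)) (t : ℝ) : ℝ × ℝ := P.v i + t • (P.v (i + 1) - P.v i)

def yMax : ℝ := Finset.univ.sup' Finset.univ_nonempty fun i => (P.v i).2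
def yMin : ℝ := Finset.univ.inf' Finset.univ_nonempty fun i => (P.v i).2

/-- The lower boundary: edges strictly between the leftmost edge `l` and the rightmost
edge `r` in anticlockwise order. -/
def FBset (l r : Fin (n + 1)) : Set (ℝ × ℝ) :=
  ⋃ a ∈ {a : Fin (n + 1) | 1 ≤ cpos a l ∧ cpos a l < cpos r l}, P.edge a

/-- The upper boundary: edges strictly between `l` and `r` in clockwise order. -/
def FTset (l r : Fin (n + 1)) : Set (ℝ × ℝ) :=
  ⋃ a ∈ {a : Fin (n + 1) | 1 ≤ cpos l a ∧ cpos l a < cpos l r}, P.edge a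

/-- The upper vertices of the left notches. -/
def QPoints : Set (ℝ × ℝ) := {p | ∃ i, P.LeftNotch i ∧ p = P.v (i + 1)}

end RectPolygon

/-!
Without left or right notches, between a leftward and a later rightward horizontal edge there is a
leftmost edge, and between a rightward and a later leftward one a rightmost edge. The heart of the
proof is that a leftmost edge is unique. Take a rightmost edge `rm` of least `x`; if the last
leftmost edge before `rm` and the first one after it were different, the two `x`-monotone
boundary pieces meeting at `rm`, together with the next monotone piece beyond one of these
leftmost edges, would be three disjoint curves whose vertical order cannot change along their
common span, and this order is contradicted at `rm`. With `l` the only leftmost edge, no edge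
from `l` to `r` is leftward and no edge from `r` to `l` is rightward, which is the claim.
-/

lemma mem_segment_of_fst_eq {p q : ℝ × ℝ} {x y : ℝ} (hp : p.1 = x) (hq : q.1 = x)
    (hy : y ∈ uIcc p.2 q.2) : (x, y) ∈ segment ℝ p q := by
  rw [← Prod.mk.eta (p := p), ← Prod.mk.eta (p := q), hp, hq, ← Prod.image_mk_segment_right,
    segment_eq_uIcc]
  exact mem_image_of_mem _ hy

lemma fst_mem_uIcc_of_mem_segment {p q z : ℝ × ℝ} (hz : z ∈ segment ℝ p q) :
    z.1 ∈ uIcc p.1 q.1 := by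
  rw [← segment_eq_uIcc]
  exact (Prod.segment_subset p q hz).1

lemma exists_mem_segment_of_mem_uIcc {p q : ℝ × ℝ} {x : ℝ} (hx : x ∈ uIcc p.1 q.1) :
    ∃ y, (x, y) ∈ segment ℝ p q := by
  have : x ∈ (LinearMap.fst ℝ ℝ ℝ).toAffineMap '' segment ℝ p q := by
    rw [image_segment]
    rwa [← segment_eq_uIcc] at hx
  obtain ⟨z, hz, rfl⟩ := this
  exact ⟨z.2, hz⟩

lemma map_negSnd_involutive : Function.Involutive (Prod.map id Neg.neg : ℝ × ℝ → ℝ × ℝ) :=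
  fun p => Prod.ext rfl (neg_neg p.2)

lemma map_negSnd_mem_preimage {C : Set (ℝ × ℝ)} {p : ℝ × ℝ} :
    Prod.map id Neg.neg p ∈ Prod.map id Neg.neg ⁻¹' C ↔ p ∈ C := by
  rw [mem_preimage, map_negSnd_involutive]

lemma segment_map_negSnd (p q : ℝ × ℝ) :
    segment ℝ (Prod.map id Neg.neg p) (Prod.map id Neg.neg q) =
      Prod.map id Neg.neg ⁻¹' segment ℝ p q := by
  rw [← map_negSnd_involutive.image_eq_preimage_symm]
  exact (image_segment ℝ (LinearMap.id.prodMap (-LinearMap.id) : ℝ × ℝ →ₗ[ℝ] ℝ × ℝ).toAffineMap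
    p q).symm

structure HasIntervalSlices (C : Set (ℝ × ℝ)) (a b : ℝ) : Prop where
  isCompact : IsCompact C
  nonempty : ∀ x ∈ Icc a b, ∃ y, (x, y) ∈ C
  ordConnected : ∀ x, OrdConnected {y | (x, y) ∈ C}

namespace HasIntervalSlices

variable {C D : Set (ℝ × ℝ)} {a b : ℝ}

lemma mono (h : HasIntervalSlices C a b) {a' b' : ℝ} (ha : a ≤ a') (hb : b' ≤ b) :
    HasIntervalSlices C a' b' :=
  ⟨h.isCompact, fun x hx => h.nonempty x ⟨ha.trans hx.1, hx.2.trans hb⟩, h.ordConnected⟩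

lemma preimage_negSnd (h : HasIntervalSlices C a b) :
    HasIntervalSlices (Prod.map id Neg.neg ⁻¹' C) a b where
  isCompact :=
    (Homeomorph.prodCongr (Homeomorph.refl ℝ) (Homeomorph.neg ℝ)).isCompact_preimage.2 h.isCompact
  nonempty x hx := by
    obtain ⟨y, hy⟩ := h.nonempty x hx
    exact ⟨-y, by simpa using hy⟩
  ordConnected x := ⟨fun _ hy _ hz _ hw =>
    (h.ordConnected x).out hz hy ⟨neg_le_neg hw.2, neg_le_neg hw.1⟩⟩

lemma slice_lt_of_lt {a' b' : ℝ} (hC : HasIntervalSlices C a b)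
    (hD : HasIntervalSlices D a' b') (hCD : Disjoint C D) {x y z y' z' : ℝ} (hy : (x, y) ∈ C)
    (hz : (x, z) ∈ D) (hyz : y < z) (hy' : (x, y') ∈ C) (hz' : (x, z') ∈ D) : y' < z' := by
  by_contra! h
  rcases le_total z y' with hzy' | hy'z
  · exact disjoint_left.1 hCD ((hC.ordConnected x).out hy hy' ⟨hyz.le, hzy'⟩) hz
  · exact disjoint_left.1 hCD hy' ((hD.ordConnected x).out hz' hz ⟨h, hy'z⟩)

lemma isClosed_setOf_exists_le (hC : IsCompact C) (hD : IsCompact D) :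
    IsClosed {x | ∃ y z, (x, y) ∈ C ∧ (x, z) ∈ D ∧ y ≤ z} := by
  have : {x | ∃ y z, (x, y) ∈ C ∧ (x, z) ∈ D ∧ y ≤ z} =
      (fun p : (ℝ × ℝ) × (ℝ × ℝ) => p.1.1) ''
        (C ×ˢ D ∩ {p | p.1.1 = p.2.1 ∧ p.1.2 ≤ p.2.2}) := by
    ext x
    constructor
    · rintro ⟨y, z, hy, hz, hyz⟩
      exact ⟨((x, y), (x, z)), ⟨⟨hy, hz⟩, rfl, hyz⟩, rfl⟩
    · rintro ⟨⟨⟨x, y⟩, ⟨x', z⟩⟩, ⟨⟨hy, hz⟩, hxx' : x = x', hyz⟩, rfl⟩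
      subst hxx'
      exact ⟨y, z, hy, hz, hyz⟩
  rw [this]
  refine ((hC.prod hD).inter_right ?_).image (by fun_prop) |>.isClosed
  rw [ofPred_and]
  exact (isClosed_eq (by fun_prop) (by fun_prop)).inter (isClosed_le (by fun_prop) (by fun_prop))

/-- The lines where `C` is below `D` and those where it is above are closed sets covering the
connected interval `[a, b]`. -/
lemma slice_lt_of_lt_of_mem_Icc (hC : HasIntervalSlices C a b) (hD : HasIntervalSlices D a b)
    (hCD : Disjoint C D) {x₀ y₀ z₀ : ℝ} (hx₀ : x₀ ∈ Icc a b) (hy₀ : (x₀, y₀) ∈ C)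
    (hz₀ : (x₀, z₀) ∈ D) (hlt : y₀ < z₀) {x y z : ℝ} (hx : x ∈ Icc a b) (hy : (x, y) ∈ C)
    (hz : (x, z) ∈ D) : y < z := by
  by_contra! hzy
  have hcover : Icc a b ⊆ {x | ∃ y z, (x, y) ∈ C ∧ (x, z) ∈ D ∧ y ≤ z} ∪
      {x | ∃ z y, (x, z) ∈ D ∧ (x, y) ∈ C ∧ z ≤ y} := by
    intro x hx
    obtain ⟨y, hy⟩ := hC.nonempty x hx
    obtain ⟨z, hz⟩ := hD.nonempty x hx
    rcases le_total y z with h | h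
    · exact Or.inl ⟨y, z, hy, hz, h⟩
    · exact Or.inr ⟨z, y, hz, hy, h⟩
  obtain ⟨x', -, ⟨y₁, z₁, hy₁, hz₁, h₁⟩, ⟨z₂, y₂, hz₂, hy₂, h₂⟩⟩ :=
    isPreconnected_closed_iff.1 isPreconnected_Icc _ _
      (isClosed_setOf_exists_le hC.isCompact hD.isCompact)
      (isClosed_setOf_exists_le hD.isCompact hC.isCompact) hcover
      ⟨x₀, hx₀, y₀, z₀, hy₀, hz₀, hlt.le⟩ ⟨x, hx, z, y, hz, hy, hzy⟩
  have h₁' : y₁ < z₁ := h₁.lt_of_ne fun h => disjoint_left.1 hCD hy₁ (h ▸ hz₁)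
  exact (hC.slice_lt_of_lt hD hCD hy₁ hz₁ h₁' hy₂ hz₂).not_ge h₂

/-- `F` lies above `G` (compare at `b`), hence above the bridge at `a`, hence above `H`; and `H`
lies above `G` (compare at `a`). So at `b` the set `H` passes strictly between the ends of the
second bridge. -/
theorem false_of_vertical_bridges {G H F : Set (ℝ × ℝ)} (hab : a ≤ b)
    (hG : HasIntervalSlices G a b) (hH : HasIntervalSlices H a b) (hF : HasIntervalSlices F a b)
    (hGH : Disjoint G H) (hGF : Disjoint G F) (hHF : Disjoint H F)
    {p₀ q₀ p₁ r₁ : ℝ × ℝ} (hp₀ : p₀ ∈ G) (hq₀ : q₀ ∈ H) (hp₀a : p₀.1 = a) (hq₀a : q₀.1 = a)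
    (hpq₀ : p₀.2 < q₀.2) (hp₁ : p₁ ∈ G) (hr₁ : r₁ ∈ F) (hp₁b : p₁.1 = b) (hr₁b : r₁.1 = b)
    (hpr₁ : p₁.2 < r₁.2) (hbridge₀ : Disjoint (segment ℝ p₀ q₀) F)
    (hbridge₁ : Disjoint (segment ℝ p₁ r₁) H) : False := by
  have ha : a ∈ Icc a b := ⟨le_rfl, hab⟩
  have hb : b ∈ Icc a b := ⟨hab, le_rfl⟩
  rcases p₀ with ⟨_, y₀⟩; rcases q₀ with ⟨_, z₀⟩; rcases p₁ with ⟨_, y₁⟩; rcases r₁ with ⟨_, w₁⟩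
  dsimp only at hp₀a hq₀a hp₁b hr₁b hpq₀ hpr₁
  subst hp₀a hq₀a hp₁b hr₁b
  obtain ⟨s, hs⟩ := hF.nonempty _ ha
  have hy₀s : y₀ < s := hG.slice_lt_of_lt_of_mem_Icc hF hGF hb hp₁ hr₁ hpr₁ ha hp₀ hs
  have hz₀s : z₀ < s := by
    by_contra! h
    exact disjoint_left.1 hbridge₀
      (mem_segment_of_fst_eq rfl rfl (Icc_subset_uIcc ⟨hy₀s.le, h⟩)) hs
  obtain ⟨t, ht⟩ := hH.nonempty _ hb
  have hy₁t : y₁ < t := hG.slice_lt_of_lt_of_mem_Icc hH hGH ha hp₀ hq₀ hpq₀ hb hp₁ ht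
  have htw₁ : t < w₁ := hH.slice_lt_of_lt_of_mem_Icc hF hHF ha hq₀ hs hz₀s hb ht hr₁
  exact disjoint_left.1 hbridge₁
    (mem_segment_of_fst_eq rfl rfl (Icc_subset_uIcc ⟨hy₁t.le, htw₁.le⟩)) ht

end HasIntervalSlices

section Polyline

def polyline (f : ℕ → ℝ × ℝ) (k : ℕ) : Set (ℝ × ℝ) := ⋃ j < k, segment ℝ (f j) (f (j + 1))

variable {f : ℕ → ℝ × ℝ} {k : ℕ}

lemma mem_polyline {p : ℝ × ℝ} : p ∈ polyline f k ↔ ∃ j < k, p ∈ segment ℝ (f j) (f (j + 1)) := by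
  simp [polyline]

lemma polyline_reverse : polyline (fun j => f (k - j)) k = polyline f k := by
  ext p
  simp only [mem_polyline]
  constructor
  · rintro ⟨j, hj, hp⟩
    refine ⟨k - (j + 1), by omega, ?_⟩
    rwa [show k - (j + 1) + 1 = k - j by omega, segment_symm]
  · rintro ⟨j, hj, hp⟩
    refine ⟨k - (j + 1), by omega, ?_⟩
    rwa [show k - (k - (j + 1)) = j + 1 by omega, show k - (k - (j + 1) + 1) = j by omega,
      segment_symm]

lemma fst_le_fst_of_le (hf : ∀ j < k, (f j).1 ≤ (f (j + 1)).1) {i j : ℕ} (hij : i ≤ j)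
    (hjk : j ≤ k) : (f i).1 ≤ (f j).1 := by
  induction j, hij using Nat.le_induction with
  | base => exact le_rfl
  | succ j hij ih => exact (ih (by omega)).trans (hf j (by omega))

lemma exists_fst_mem_Icc (hf : ∀ j < k, (f j).1 ≤ (f (j + 1)).1) {x : ℝ} (hk : 0 < k)
    (h₀ : (f 0).1 ≤ x) (hk' : x ≤ (f k).1) : ∃ j < k, x ∈ Icc (f j).1 (f (j + 1)).1 := by
  induction k with
  | zero => omega
  | succ k ih =>
    rcases Nat.eq_zero_or_pos k with rfl | hk
    · exact ⟨0, by omega, h₀, hk'⟩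
    rcases le_total x (f k).1 with hx | hx
    · obtain ⟨j, hj, hxj⟩ := ih (fun j hj => hf j (by omega)) hk hx
      exact ⟨j, by omega, hxj⟩
    · exact ⟨k, by omega, hx, hk'⟩

lemma mem_polyline_of_mem_uIcc (hf : ∀ j < k, (f j).1 ≤ (f (j + 1)).1) {x y₁ y₂ y : ℝ}
    (hy : y ∈ uIcc y₁ y₂) : ∀ d j, j + d < k → (x, y₁) ∈ segment ℝ (f j) (f (j + 1)) →
      (x, y₂) ∈ segment ℝ (f (j + d)) (f (j + d + 1)) → (x, y) ∈ polyline f k := by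
  intro d
  induction d generalizing y₁ with
  | zero =>
    intro j hj h₁ h₂
    exact mem_polyline.2 ⟨j, hj, (convex_segment _ _).segment_subset h₁ h₂
      (mem_segment_of_fst_eq rfl rfl hy)⟩
  | succ d ih =>
    intro j hj h₁ h₂
    have hx₁ := fst_mem_uIcc_of_mem_segment h₁
    have hx₂ := fst_mem_uIcc_of_mem_segment h₂
    rw [uIcc_of_le (hf j (by omega))] at hx₁
    rw [uIcc_of_le (hf (j + (d + 1)) (by omega))] at hx₂
    have hvertex : f (j + 1) = (x, (f (j + 1)).2) := Prod.ext (le_antisymm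
      ((fst_le_fst_of_le hf (by omega) (by omega)).trans hx₂.1) hx₁.2) rfl
    rcases uIcc_subset_uIcc_union_uIcc hy with hy | hy
    · have hm : (x, (f (j + 1)).2) ∈ segment ℝ (f j) (f (j + 1)) := by
        rw [← hvertex]; exact right_mem_segment ℝ _ _
      exact mem_polyline.2 ⟨j, by omega, (convex_segment _ _).segment_subset h₁ hm
        (mem_segment_of_fst_eq rfl rfl hy)⟩
    · have hm : (x, (f (j + 1)).2) ∈ segment ℝ (f (j + 1)) (f (j + 1 + 1)) := by
        rw [← hvertex]; exact left_mem_segment ℝ _ _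
      exact ih hy (j + 1) (by omega) hm (by rwa [show j + 1 + d = j + (d + 1) by omega])

theorem hasIntervalSlices_polyline (hf : ∀ j < k, (f j).1 ≤ (f (j + 1)).1) (hk : 0 < k) :
    HasIntervalSlices (polyline f k) (f 0).1 (f k).1 where
  isCompact := (finite_lt_nat k).isCompact_biUnion fun j _ => by
    rw [← convexHull_pair (𝕜 := ℝ)]
    exact (toFinite _).isCompact_convexHull ℝ
  nonempty x hx := by
    obtain ⟨j, hj, hxj⟩ := exists_fst_mem_Icc hf hk hx.1 hx.2
    obtain ⟨y, hy⟩ := exists_mem_segment_of_mem_uIcc (Icc_subset_uIcc hxj)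
    exact ⟨y, mem_polyline.2 ⟨j, hj, hy⟩⟩
  ordConnected x := ⟨fun y₁ h₁ y₂ h₂ y hy => by
    obtain ⟨j₁, hj₁, h₁⟩ := mem_polyline.1 h₁
    obtain ⟨j₂, hj₂, h₂⟩ := mem_polyline.1 h₂
    rcases le_total j₁ j₂ with hj | hj
    · exact mem_polyline_of_mem_uIcc hf (Icc_subset_uIcc hy) (j₂ - j₁) j₁ (by omega) h₁
        (by rwa [show j₁ + (j₂ - j₁) = j₂ by omega])
    · exact mem_polyline_of_mem_uIcc hf (Icc_subset_uIcc' hy) (j₁ - j₂) j₂ (by omega) h₂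
        (by rwa [show j₂ + (j₁ - j₂) = j₁ by omega])⟩

theorem hasIntervalSlices_polyline_of_antitone (hf : ∀ j < k, (f (j + 1)).1 ≤ (f j).1)
    (hk : 0 < k) : HasIntervalSlices (polyline f k) (f k).1 (f 0).1 := by
  have h := hasIntervalSlices_polyline (f := fun j => f (k - j)) (k := k)
    (fun j hj => by simpa [show k - j = k - (j + 1) + 1 by omega] using hf (k - (j + 1)) (by omega))
    hk
  simpa [polyline_reverse] using h

end Polyline

namespace RectPolygon

open Fin.NatCast Fin.CommRing

variable {n : ℕ} {P : RectPolygon n}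

lemma one_le (P : RectPolygon n) : 1 ≤ n := by
  by_contra! h
  obtain rfl : n = 0 := by omega
  exact P.nondegen 0 (congrArg P.v (Fin.ext (by simp)))

lemma add_one_add_natCast_self (i : Fin (n + 1)) : i + 1 + (n : Fin (n + 1)) = i := by
  rw [add_assoc, add_comm 1, ← Nat.cast_add_one, Fin.natCast_self, add_zero]

lemma add_natCast_add_natCast (i : Fin (n + 1)) (a b : ℕ) :
    i + (a : Fin (n + 1)) + (b : Fin (n + 1)) = i + ((a + b : ℕ) : Fin (n + 1)) := by
  rw [Nat.cast_add, add_assoc]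

lemma add_natCast_add_one (o : Fin (n + 1)) (a : ℕ) :
    o + ((a + 1 : ℕ) : Fin (n + 1)) = o + a + 1 := by
  rw [Nat.cast_succ, add_assoc]

lemma add_one_add_natCast_pred (i : Fin (n + 1)) (hn : 1 ≤ n) :
    i + 1 + ((n - 1 : ℕ) : Fin (n + 1)) = i - 1 := by
  rw [eq_sub_iff_add_eq, ← add_natCast_add_one, Nat.sub_add_cancel hn, add_one_add_natCast_self]

lemma cpos_add {o : Fin (n + 1)} {a : ℕ} (ha : a ≤ n) : cpos o (o + (a : Fin (n + 1))) = a := by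
  rw [cpos, add_sub_cancel_left, Fin.val_cast_of_lt (by omega)]

lemma add_cpos (o e : Fin (n + 1)) : o + ((cpos o e : ℕ) : Fin (n + 1)) = e := by
  rw [cpos, Fin.cast_val_eq_self, add_sub_cancel]

lemma sub_cpos (o e : Fin (n + 1)) : e - ((cpos o e : ℕ) : Fin (n + 1)) = o :=
  (eq_sub_of_add_eq (add_cpos o e)).symm

lemma cpos_le (o e : Fin (n + 1)) : cpos o e ≤ n := Nat.lt_succ_iff.1 (e - o).isLt

lemma eq_zero_of_add_natCast_eq {o : Fin (n + 1)} {a : ℕ} (ha : a ≤ n)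
    (h : o + (a : Fin (n + 1)) = o) : a = 0 := by
  rw [← cpos_add (o := o) ha, h, cpos, sub_self, Fin.val_zero]

lemma horiz_iff_not_vert (i : Fin (n + 1)) : P.Horiz i ↔ ¬ P.Vert i :=
  ⟨fun hh hv => P.nondegen i (Prod.ext hv hh), (P.axis i).resolve_left⟩

lemma vert_add_one_iff (i : Fin (n + 1)) : P.Vert (i + 1) ↔ ¬ P.Vert i := by
  have h := P.alternate i
  rw [show i + 2 = i + 1 + 1 by ring] at h
  unfold Vert
  tauto

lemma horiz_add_one_iff (i : Fin (n + 1)) : P.Horiz (i + 1) ↔ P.Vert i := by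
  rw [horiz_iff_not_vert, vert_add_one_iff, not_not]

lemma horiz_add_two_iff (i : Fin (n + 1)) : P.Horiz (i + 1 + 1) ↔ P.Horiz i := by
  rw [horiz_add_one_iff, vert_add_one_iff, horiz_iff_not_vert]

lemma Rightward.not_leftward {i : Fin (n + 1)} (h : P.Rightward i) : ¬ P.Leftward i :=
  fun h' => h.2.not_gt h'.2

lemma Vert.not_leftward {i : Fin (n + 1)} (h : P.Vert i) : ¬ P.Leftward i :=
  fun h' => (horiz_iff_not_vert i).1 h'.1 h

lemma Vert.not_rightward {i : Fin (n + 1)} (h : P.Vert i) : ¬ P.Rightward i :=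
  fun h' => (horiz_iff_not_vert i).1 h'.1 h

lemma rightward_of_not_leftward {i : Fin (n + 1)} (hh : P.Horiz i) (h : ¬ P.Leftward i) :
    P.Rightward i :=
  ⟨hh, (le_of_not_gt fun h' => h ⟨hh, h'⟩).lt_of_ne fun h' => P.nondegen i (Prod.ext h' hh)⟩

lemma leftward_of_not_rightward {i : Fin (n + 1)} (hh : P.Horiz i) (h : ¬ P.Rightward i) :
    P.Leftward i :=
  ⟨hh, (le_of_not_gt fun h' => h ⟨hh, h'⟩).lt_of_ne fun h' => P.nondegen i (Prod.ext h'.symm hh)⟩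

lemma fst_le_of_not_leftward {i : Fin (n + 1)} (h : ¬ P.Leftward i) :
    (P.v i).1 ≤ (P.v (i + 1)).1 := by
  rcases P.axis i with hv | hh
  · exact hv.le
  · exact (rightward_of_not_leftward hh h).2.le

lemma fst_le_of_not_rightward {i : Fin (n + 1)} (h : ¬ P.Rightward i) :
    (P.v (i + 1)).1 ≤ (P.v i).1 := by
  rcases P.axis i with hv | hh
  · exact hv.ge
  · exact (leftward_of_not_rightward hh h).2.le

lemma leftmostEdge_of_leftward_of_rightward (hR : ∀ i, ¬ P.RightNotch i) {i : Fin (n + 1)}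
    (h₁ : P.Leftward (i - 1)) (h₂ : P.Rightward (i + 1)) : P.LeftmostEdge i := by
  have hv : P.Vert i := by
    simpa using (vert_add_one_iff (i - 1)).2 ((horiz_iff_not_vert _).1 h₁.1)
  refine ⟨⟨hv, (lt_or_gt_of_ne fun h => P.nondegen i (Prod.ext hv h)).resolve_right ?_⟩, h₁, h₂⟩
  exact fun h => hR i ⟨⟨hv, h⟩, h₁, h₂⟩

lemma rightmostEdge_of_rightward_of_leftward (hL : ∀ i, ¬ P.LeftNotch i) {i : Fin (n + 1)}
    (h₁ : P.Rightward (i - 1)) (h₂ : P.Leftward (i + 1)) : P.RightmostEdge i := by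
  have hv : P.Vert i := by
    simpa using (vert_add_one_iff (i - 1)).2 ((horiz_iff_not_vert _).1 h₁.1)
  refine ⟨⟨hv, (lt_or_gt_of_ne fun h => P.nondegen i (Prod.ext hv h)).resolve_left ?_⟩, h₁, h₂⟩
  exact fun h => hL i ⟨⟨hv, h⟩, h₁, h₂⟩

lemma exists_corner_first {Q C : Fin (n + 1) → Prop} (hQ : ∀ i, Q i → P.Horiz i)
    (hC : ∀ i, P.Horiz (i - 1) → ¬ Q (i - 1) → Q (i + 1) → C i) {e : Fin (n + 1)} {d : ℕ}
    (he : P.Horiz e) (he' : ¬ Q e) (hd : Q (e + d)) :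
    ∃ t, 0 < t ∧ t < d ∧ C (e + t) ∧ ∀ s ≤ t, ¬ Q (e + s) := by
  classical
  have hex : ∃ m : ℕ, Q (e + m) := ⟨d, hd⟩
  have hm : Q (e + Nat.find hex) := Nat.find_spec hex
  have hbefore : ∀ s < Nat.find hex, ¬ Q (e + s) := fun s hs => Nat.find_min hex hs
  have hmd : Nat.find hex ≤ d := Nat.find_min' hex hd
  obtain ⟨t, ht⟩ : ∃ t, Nat.find hex = t + 1 + 1 := by
    refine ⟨Nat.find hex - 2, ?_⟩
    have h0 : Nat.find hex ≠ 0 := fun h => he' (by simpa [h] using hm)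
    have h1 : Nat.find hex ≠ 1 := fun h =>
      (horiz_iff_not_vert e).1 he ((horiz_add_one_iff e).1 (hQ _ (by simpa [h] using hm)))
    omega
  have hcast : e + ((t + 1 + 1 : ℕ) : Fin (n + 1)) = e + ((t + 1 : ℕ) : Fin (n + 1)) + 1 := by
    push_cast; ring
  have hcast' : e + ((t + 1 : ℕ) : Fin (n + 1)) - 1 = e + t := by push_cast; ring
  rw [ht, hcast] at hm
  rw [ht] at hbefore hmd
  refine ⟨t + 1, by omega, by omega, hC _ ?_ ?_ hm, fun s hs => hbefore s (by omega)⟩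
  · rw [hcast', ← horiz_add_two_iff, show e + t + 1 + 1 = e + ((t + 1 : ℕ) : Fin (n + 1)) + 1 by
      push_cast; ring]
    exact hQ _ hm
  · rw [hcast']
    exact hbefore t (by omega)

lemma exists_corner_last {Q C : Fin (n + 1) → Prop} (hQ : ∀ i, Q i → P.Horiz i)
    (hC : ∀ i, Q (i - 1) → P.Horiz (i + 1) → ¬ Q (i + 1) → C i) {e : Fin (n + 1)} {d : ℕ}
    (he : Q e) (hd : P.Horiz (e + d)) (hd' : ¬ Q (e + d)) :
    ∃ t, 0 < t ∧ t < d ∧ C (e + t) ∧ ∀ s, t ≤ s → s ≤ d → ¬ Q (e + s) := by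
  classical
  set m := Nat.findGreatest (fun j : ℕ => Q (e + j)) d
  have hm : Q (e + m) := Nat.findGreatest_spec (P := fun j : ℕ => Q (e + j)) (Nat.zero_le d)
    (by simpa using he)
  have hafter : ∀ s, m < s → s ≤ d → ¬ Q (e + s) := fun s h₁ h₂ =>
    Nat.findGreatest_is_greatest h₁ h₂
  have hmd : m ≤ d := Nat.findGreatest_le d
  have hm₁ : m ≠ d := fun h => hd' (h ▸ hm)
  have hcast : e + ((m + 1 : ℕ) : Fin (n + 1)) = e + m + 1 := by push_cast; ring
  have hcast' : e + ((m + 1 + 1 : ℕ) : Fin (n + 1)) = e + ((m + 1 : ℕ) : Fin (n + 1)) + 1 := by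
    push_cast; ring
  have hm₂ : m + 1 ≠ d := fun h => (horiz_iff_not_vert _).1 (hQ _ hm)
    ((horiz_add_one_iff _).1 (by rwa [← hcast, h]))
  refine ⟨m + 1, by omega, by omega, hC _ ?_ ?_ ?_, fun s h₁ h₂ => hafter s (by omega) h₂⟩
  · rwa [hcast, add_sub_cancel_right]
  · rw [hcast, horiz_add_two_iff]
    exact hQ _ hm
  · rw [← hcast']
    exact hafter (m + 1 + 1) (by omega) (by omega)

theorem exists_leftmostEdge_not_rightward_before (hR : ∀ i, ¬ P.RightNotch i)
    {e : Fin (n + 1)} {d : ℕ} (he : P.Leftward e) (hd : P.Rightward (e + d)) :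
    ∃ t, 0 < t ∧ t < d ∧ P.LeftmostEdge (e + t) ∧ ∀ s ≤ t, ¬ P.Rightward (e + s) :=
  exists_corner_first (fun _ h => h.1) (fun _ hh hn hr =>
    leftmostEdge_of_leftward_of_rightward hR (leftward_of_not_rightward hh hn) hr)
    he.1 (fun h => h.not_leftward he) hd

theorem exists_leftmostEdge_not_leftward_after (hR : ∀ i, ¬ P.RightNotch i)
    {e : Fin (n + 1)} {d : ℕ} (he : P.Leftward e) (hd : P.Rightward (e + d)) :
    ∃ t, 0 < t ∧ t < d ∧ P.LeftmostEdge (e + t) ∧ ∀ s, t ≤ s → s ≤ d → ¬ P.Leftward (e + s) :=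
  exists_corner_last (fun _ h => h.1) (fun _ hl hh hn =>
    leftmostEdge_of_leftward_of_rightward hR hl (rightward_of_not_leftward hh hn))
    he hd.1 hd.not_leftward

theorem exists_rightmostEdge_not_leftward_before (hL : ∀ i, ¬ P.LeftNotch i)
    {e : Fin (n + 1)} {d : ℕ} (he : P.Rightward e) (hd : P.Leftward (e + d)) :
    ∃ t, 0 < t ∧ t < d ∧ P.RightmostEdge (e + t) ∧ ∀ s ≤ t, ¬ P.Leftward (e + s) :=
  exists_corner_first (fun _ h => h.1) (fun _ hh hn hl =>
    rightmostEdge_of_rightward_of_leftward hL (rightward_of_not_leftward hh hn) hl)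
    he.1 he.not_leftward hd

theorem exists_rightmostEdge_not_rightward_after (hL : ∀ i, ¬ P.LeftNotch i)
    {e : Fin (n + 1)} {d : ℕ} (he : P.Rightward e) (hd : P.Leftward (e + d)) :
    ∃ t, 0 < t ∧ t < d ∧ P.RightmostEdge (e + t) ∧ ∀ s, t ≤ s → s ≤ d → ¬ P.Rightward (e + s) :=
  exists_corner_last (fun _ h => h.1) (fun _ hr hh hn =>
    rightmostEdge_of_rightward_of_leftward hL hr (leftward_of_not_rightward hh hn))
    he hd.1 (fun h => h.not_leftward hd)

lemma edge_add_natCast (o : Fin (n + 1)) (t : ℕ) :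
    P.edge (o + t) = segment ℝ (P.v (o + t)) (P.v (o + (t + 1 : ℕ))) := by
  rw [edge, Nat.cast_add_one, add_assoc]

lemma disjoint_edge_add_natCast (i : Fin (n + 1)) {d : ℕ} (hd₁ : 2 ≤ d) (hd₂ : d + 2 ≤ n + 1) :
    Disjoint (P.edge i) (P.edge (i + d)) := by
  refine P.simple i (i + d) (fun h => ?_) (fun h => ?_) (fun h => ?_)
  · have := eq_zero_of_add_natCast_eq (by omega) h
    omega
  · have hcast : i + 1 + ((d - 1 : ℕ) : Fin (n + 1)) = i + d := by
      rw [Nat.cast_sub (by omega)]; ring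
    have := eq_zero_of_add_natCast_eq (by omega) (hcast.trans h)
    omega
  · have hcast : i + ((d + 1 : ℕ) : Fin (n + 1)) = i + d + 1 := by push_cast; ring
    have := eq_zero_of_add_natCast_eq (by omega) (hcast.trans h)
    omega

section Arc

variable (P) in
def arc (o : Fin (n + 1)) (a b : ℕ) : Set (ℝ × ℝ) := ⋃ t ∈ Ico a b, P.edge (o + t)

variable {o : Fin (n + 1)} {a b : ℕ}

lemma edge_subset_arc {t : ℕ} (ht : t ∈ Ico a b) : P.edge (o + t) ⊆ P.arc o a b :=
  subset_biUnion_of_mem (u := fun t : ℕ => P.edge (o + t)) ht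

lemma left_mem_arc (hab : a < b) : P.v (o + a) ∈ P.arc o a b :=
  edge_subset_arc ⟨le_rfl, hab⟩ (left_mem_segment ℝ _ _)

lemma right_mem_arc (hab : a < b) : P.v (o + b) ∈ P.arc o a b := by
  have h := edge_subset_arc (P := P) (o := o) ⟨Nat.le_pred_of_lt hab, Nat.pred_lt_of_lt hab⟩
  rw [edge_add_natCast, Nat.pred_eq_sub_one, Nat.sub_add_cancel (by omega)] at h
  exact h (right_mem_segment ℝ _ _)

lemma disjoint_arc {a₁ a₂ b₁ b₂ : ℕ} (h₁ : a₂ < b₁) (h₂ : b₂ ≤ a₁ + n) :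
    Disjoint (P.arc o a₁ a₂) (P.arc o b₁ b₂) := by
  simp only [arc, disjoint_iUnion_left, disjoint_iUnion_right, mem_Ico]
  intro u hu t ht
  rw [show o + (u : Fin (n + 1)) = o + t + ((u - t : ℕ) : Fin (n + 1)) by
    rw [add_natCast_add_natCast, Nat.add_sub_cancel' (by omega)]]
  exact disjoint_edge_add_natCast _ (by omega) (by omega)

lemma arc_eq_polyline (hab : a ≤ b) :
    P.arc o a b = polyline (fun j => P.v (o + (a + j : ℕ))) (b - a) := by
  ext p
  simp only [arc, mem_iUnion, mem_Ico, exists_prop, mem_polyline]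
  constructor
  · rintro ⟨t, ⟨hat, htb⟩, hp⟩
    refine ⟨t - a, by omega, ?_⟩
    rwa [edge_add_natCast, show t = a + (t - a) by omega] at hp
  · rintro ⟨j, hj, hp⟩
    refine ⟨a + j, ⟨by omega, by omega⟩, ?_⟩
    rwa [edge_add_natCast]

lemma fst_v_le_of_not_leftward (h : ∀ s, a ≤ s → s < b → ¬ P.Leftward (o + s)) {i j : ℕ}
    (hai : a ≤ i) (hij : i ≤ j) (hjb : j ≤ b) : (P.v (o + i)).1 ≤ (P.v (o + j)).1 := by
  induction j, hij using Nat.le_induction with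
  | base => exact le_rfl
  | succ j hij ih =>
    refine (ih (by omega)).trans ?_
    simpa [add_assoc] using fst_le_of_not_leftward (h j (by omega) (by omega))

lemma fst_v_le_of_not_rightward (h : ∀ s, a ≤ s → s < b → ¬ P.Rightward (o + s)) {i j : ℕ}
    (hai : a ≤ i) (hij : i ≤ j) (hjb : j ≤ b) : (P.v (o + j)).1 ≤ (P.v (o + i)).1 := by
  induction j, hij using Nat.le_induction with
  | base => exact le_rfl
  | succ j hij ih =>
    refine le_trans ?_ (ih (by omega))
    simpa [add_assoc] using fst_le_of_not_rightward (h j (by omega) (by omega))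

lemma hasIntervalSlices_arc_of_not_leftward (hab : a < b)
    (h : ∀ s, a ≤ s → s < b → ¬ P.Leftward (o + s)) :
    HasIntervalSlices (P.arc o a b) (P.v (o + a)).1 (P.v (o + b)).1 := by
  rw [arc_eq_polyline hab.le]
  have := hasIntervalSlices_polyline (f := fun j => P.v (o + (a + j : ℕ))) (k := b - a)
    (fun j hj => fst_v_le_of_not_leftward h le_self_add (by omega) (by omega)) (by omega)
  simpa [show a + (b - a) = b by omega] using this

lemma hasIntervalSlices_arc_of_not_rightward (hab : a < b)
    (h : ∀ s, a ≤ s → s < b → ¬ P.Rightward (o + s)) :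
    HasIntervalSlices (P.arc o a b) (P.v (o + b)).1 (P.v (o + a)).1 := by
  rw [arc_eq_polyline hab.le]
  have := hasIntervalSlices_polyline_of_antitone (f := fun j => P.v (o + (a + j : ℕ)))
    (k := b - a) (fun j hj => fst_v_le_of_not_rightward h le_self_add (by omega) (by omega))
    (by omega)
  simpa [show a + (b - a) = b by omega] using this

end Arc

lemma exists_rightmostEdge_not_leftward_between (hL : ∀ i, ¬ P.LeftNotch i) {o : Fin (n + 1)}
    {t₁ t₀ : ℕ} (ht : t₁ + 1 < t₀) (h₁ : P.LeftmostEdge (o + t₁)) (h₀ : P.LeftmostEdge (o + t₀)) :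
    ∃ k, t₁ + 1 < k ∧ k + 1 < t₀ ∧ P.RightmostEdge (o + k) ∧
      ∀ s, t₁ + 1 ≤ s → s < k → ¬ P.Leftward (o + s) := by
  obtain ⟨c, hc₀, hc, hrm, hrun⟩ := exists_rightmostEdge_not_leftward_before hL
    (e := o + (t₁ + 1 : ℕ)) (d := t₀ - 1 - (t₁ + 1)) (by rw [add_natCast_add_one]; exact h₁.2.2)
    (by rw [add_natCast_add_natCast, show t₁ + 1 + (t₀ - 1 - (t₁ + 1)) = t₀ - 1 by omega,
      Nat.cast_sub (by omega), Nat.cast_one, ← add_sub_assoc]; exact h₀.2.1)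
  rw [add_natCast_add_natCast] at hrm
  refine ⟨t₁ + 1 + c, by omega, by omega, hrm, fun s hs₁ hs₂ => ?_⟩
  have := hrun (s - (t₁ + 1)) (by omega)
  rwa [add_natCast_add_natCast, Nat.add_sub_cancel' hs₁] at this

lemma exists_rightmostEdge_not_rightward_between (hL : ∀ i, ¬ P.LeftNotch i) {o : Fin (n + 1)}
    {t₁ t₀ : ℕ} (ht : t₁ + 1 < t₀) (h₁ : P.LeftmostEdge (o + t₁)) (h₀ : P.LeftmostEdge (o + t₀)) :
    ∃ k, t₁ + 1 < k ∧ k + 1 < t₀ ∧ P.RightmostEdge (o + k) ∧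
      ∀ s, k ≤ s → s < t₀ → ¬ P.Rightward (o + s) := by
  obtain ⟨c, hc₀, hc, hrm, hrun⟩ := exists_rightmostEdge_not_rightward_after hL
    (e := o + (t₁ + 1 : ℕ)) (d := t₀ - 1 - (t₁ + 1)) (by rw [add_natCast_add_one]; exact h₁.2.2)
    (by rw [add_natCast_add_natCast, show t₁ + 1 + (t₀ - 1 - (t₁ + 1)) = t₀ - 1 by omega,
      Nat.cast_sub (by omega), Nat.cast_one, ← add_sub_assoc]; exact h₀.2.1)
  rw [add_natCast_add_natCast] at hrm
  refine ⟨t₁ + 1 + c, by omega, by omega, hrm, fun s hs₁ hs₂ => ?_⟩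
  have := hrun (s - (t₁ + 1)) (by omega) (by omega)
  rwa [add_natCast_add_natCast, Nat.add_sub_cancel' (by omega)] at this

lemma false_of_leftmostEdge_lt_of_fst_le (hL : ∀ i, ¬ P.LeftNotch i) {rm : Fin (n + 1)}
    (hrm : P.RightmostEdge rm) (hmin : ∀ j, P.RightmostEdge j → (P.v rm).1 ≤ (P.v j).1)
    {t₁ t₀ : ℕ} (ht₁ : 0 < t₁) (ht : t₁ + 1 < t₀) (ht₀ : t₀ < n - 1)
    (hlm₁ : P.LeftmostEdge (rm + 1 + t₁)) (hW : ∀ s ≤ t₁, ¬ P.Rightward (rm + 1 + s))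
    (hlm : P.LeftmostEdge (rm + 1 + t₀))
    (hS : ∀ s, t₀ ≤ s → s ≤ n - 1 → ¬ P.Leftward (rm + 1 + s))
    (hμν : (P.v (rm + 1 + t₀)).1 ≤ (P.v (rm + 1 + t₁)).1) : False := by
  set o := rm + 1
  have hon : o + n = rm := add_one_add_natCast_self rm
  obtain ⟨k, hk₁, hk₀, hrm₁, hS₁⟩ := exists_rightmostEdge_not_leftward_between hL ht hlm₁ hlm
  -- `W` runs from `rm` back to `lm₁`, `S` from `lm` to `rm`, and `S₁` from `lm₁` to `rm₁`
  have hWs := hasIntervalSlices_arc_of_not_rightward (P := P) (o := o) ht₁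
    fun s _ hs => hW s hs.le
  have hSs := hasIntervalSlices_arc_of_not_leftward (P := P) (o := o) (a := t₀ + 1) (b := n)
    (by omega) fun s h₁ h₂ => hS s (by omega) (by omega)
  have hS₁s := hasIntervalSlices_arc_of_not_leftward (P := P) (o := o) hk₁ hS₁
  rw [Nat.cast_zero, add_zero] at hWs
  rw [hon] at hSs
  have hxrm : (P.v rm).1 = (P.v o).1 := hrm.1.1
  have hxlm₁ : (P.v (o + (t₁ + 1 : ℕ))).1 = (P.v (o + t₁)).1 := by
    rw [add_natCast_add_one]; exact hlm₁.1.1.symm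
  have hxlm : (P.v (o + (t₀ + 1 : ℕ))).1 = (P.v (o + t₀)).1 := by
    rw [add_natCast_add_one]; exact hlm.1.1.symm
  have hab : (P.v (o + t₁)).1 ≤ (P.v o).1 := by
    simpa using fst_v_le_of_not_rightward (fun s _ hs => hW s hs.le) le_rfl (Nat.zero_le _) le_rfl
  have hv₀ : P.v o ∈ P.arc o 0 t₁ := by simpa using left_mem_arc (P := P) (o := o) ht₁
  have hvrm : P.v rm ∈ P.arc o (t₀ + 1) n := by
    rw [← hon]; exact right_mem_arc (by omega)
  refine HasIntervalSlices.false_of_vertical_bridges hab hWs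
    (hS₁s.mono hxlm₁.le (hxrm.symm.trans_le (hmin _ hrm₁))) (hSs.mono (hxlm ▸ hμν) hxrm.ge)
    (disjoint_arc (by omega) (by omega)) (disjoint_arc (by omega) (by omega))
    (disjoint_arc (by omega) (by omega)) (right_mem_arc ht₁) (left_mem_arc (by omega)) rfl
    hxlm₁ ?_ hv₀ hvrm rfl hxrm hrm.1.2 ?_ ?_
  · rw [add_natCast_add_one]; exact hlm₁.1.2
  · rw [← edge_add_natCast]
    exact (disjoint_arc (a₂ := t₁ + 1) (by omega) (by omega)).mono_left
      (edge_subset_arc ⟨le_rfl, by omega⟩)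
  · rw [segment_symm]
    change Disjoint (P.edge rm) _
    rw [← hon]
    exact ((disjoint_arc (b₁ := n) (b₂ := n + 1) (by omega) (by omega)).mono_right
      (edge_subset_arc ⟨le_rfl, by omega⟩)).symm

/-- The argument of `false_of_leftmostEdge_lt_of_fst_le`, applied to the mirror images of the
three pieces under `y ↦ -y`. -/
lemma false_of_leftmostEdge_lt_of_fst_lt (hL : ∀ i, ¬ P.LeftNotch i) {rm : Fin (n + 1)}
    (hrm : P.RightmostEdge rm) (hmin : ∀ j, P.RightmostEdge j → (P.v rm).1 ≤ (P.v j).1)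
    {t₁ t₀ : ℕ} (ht₁ : 0 < t₁) (ht : t₁ + 1 < t₀) (ht₀ : t₀ < n - 1)
    (hlm₁ : P.LeftmostEdge (rm + 1 + t₁)) (hW : ∀ s ≤ t₁, ¬ P.Rightward (rm + 1 + s))
    (hlm : P.LeftmostEdge (rm + 1 + t₀))
    (hS : ∀ s, t₀ ≤ s → s ≤ n - 1 → ¬ P.Leftward (rm + 1 + s))
    (hνμ : (P.v (rm + 1 + t₁)).1 < (P.v (rm + 1 + t₀)).1) : False := by
  set o := rm + 1
  set σ : ℝ × ℝ → ℝ × ℝ := Prod.map id Neg.neg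
  have hon : o + n = rm := add_one_add_natCast_self rm
  obtain ⟨k, hk₁, hk₀, hrm₂, hW₂⟩ := exists_rightmostEdge_not_rightward_between hL ht hlm₁ hlm
  -- `S` runs from `lm` to `rm`, `W` from `rm` back to `lm₁`, and `W₂` from `rm₂` back to `lm`
  have hSs := hasIntervalSlices_arc_of_not_leftward (P := P) (o := o) (a := t₀ + 1) (b := n)
    (by omega) fun s h₁ h₂ => hS s (by omega) (by omega)
  have hWs := hasIntervalSlices_arc_of_not_rightward (P := P) (o := o) ht₁
    fun s _ hs => hW s hs.le
  have hW₂s := hasIntervalSlices_arc_of_not_rightward (P := P) (o := o) (a := k + 1) (by omega)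
    fun s h₁ h₂ => hW₂ s (by omega) h₂
  rw [Nat.cast_zero, add_zero] at hWs
  rw [hon] at hSs
  have hxrm : (P.v rm).1 = (P.v o).1 := hrm.1.1
  have hxrm₂ : (P.v (o + (k + 1 : ℕ))).1 = (P.v (o + k)).1 := by
    rw [add_natCast_add_one]; exact hrm₂.1.1.symm
  have hxlm : (P.v (o + (t₀ + 1 : ℕ))).1 = (P.v (o + t₀)).1 := by
    rw [add_natCast_add_one]; exact hlm.1.1.symm
  have hab : (P.v (o + t₀)).1 ≤ (P.v o).1 := by
    rw [← hxlm, ← hxrm, ← hon]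
    exact fst_v_le_of_not_leftward (fun s h₁ h₂ => hS s (by omega) (by omega)) le_rfl
      (by omega) le_rfl
  have hv₀ : P.v o ∈ P.arc o 0 t₁ := by simpa using left_mem_arc (P := P) (o := o) ht₁
  have hvrm : P.v rm ∈ P.arc o (t₀ + 1) n := by
    rw [← hon]; exact right_mem_arc (by omega)
  refine HasIntervalSlices.false_of_vertical_bridges (p₀ := σ (P.v (o + (t₀ + 1 : ℕ))))
    (q₀ := σ (P.v (o + t₀))) (p₁ := σ (P.v rm)) (r₁ := σ (P.v o)) hab
    (hSs.preimage_negSnd.mono hxlm.le hxrm.ge)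
    (hW₂s.preimage_negSnd.mono le_rfl ((hxrm.symm.trans_le (hmin _ hrm₂)).trans hxrm₂.ge))
    (hWs.preimage_negSnd.mono hνμ.le le_rfl)
    ((disjoint_arc (by omega) (by omega)).symm.preimage σ)
    ((disjoint_arc (by omega) (by omega)).symm.preimage σ)
    ((disjoint_arc (by omega) (by omega)).symm.preimage σ)
    (map_negSnd_mem_preimage.2 (left_mem_arc (by omega)))
    (map_negSnd_mem_preimage.2 (right_mem_arc (by omega))) hxlm rfl ?_
    (map_negSnd_mem_preimage.2 hvrm) (map_negSnd_mem_preimage.2 hv₀) hxrm rfl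
    (neg_lt_neg hrm.1.2) ?_ ?_
  · rw [add_natCast_add_one]; exact neg_lt_neg hlm.1.2
  · rw [segment_map_negSnd, segment_symm, ← edge_add_natCast]
    exact ((disjoint_arc (b₁ := t₀) (b₂ := t₀ + 1) (by omega) (by omega)).mono_right
      (edge_subset_arc ⟨le_rfl, by omega⟩)).symm.preimage σ
  · rw [segment_map_negSnd]
    change Disjoint (σ ⁻¹' P.edge rm) _
    rw [← hon]
    exact ((disjoint_arc (b₁ := n) (b₂ := n + 1) (by omega) (by omega)).mono_right
      (edge_subset_arc ⟨le_rfl, by omega⟩)).symm.preimage σ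

lemma exists_rightmostEdge_forall_fst_le (hL : ∀ i, ¬ P.LeftNotch i) {e : Fin (n + 1)}
    (he : P.LeftmostEdge e) :
    ∃ r, P.RightmostEdge r ∧ ∀ j, P.RightmostEdge j → (P.v r).1 ≤ (P.v j).1 := by
  classical
  obtain ⟨t, -, -, hr, -⟩ := exists_rightmostEdge_not_leftward_before hL he.2.2
    (by rw [add_one_add_natCast_pred _ P.one_le]; exact he.2.1)
  obtain ⟨r, hr, hmin⟩ := Finset.exists_min_image (Finset.univ.filter P.RightmostEdge)
    (fun i => (P.v i).1) ⟨_, Finset.mem_filter.2 ⟨Finset.mem_univ _, hr⟩⟩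
  exact ⟨r, (Finset.mem_filter.1 hr).2,
    fun j hj => hmin j (Finset.mem_filter.2 ⟨Finset.mem_univ _, hj⟩)⟩

theorem leftmostEdge_unique (hL : ∀ i, ¬ P.LeftNotch i) (hR : ∀ i, ¬ P.RightNotch i)
    {e₁ e₂ : Fin (n + 1)} (h₁ : P.LeftmostEdge e₁) (h₂ : P.LeftmostEdge e₂) : e₁ = e₂ := by
  obtain ⟨rm, hrm, hmin⟩ := exists_rightmostEdge_forall_fst_le hL h₁
  have hprev : P.Rightward (rm + 1 + ((n - 1 : ℕ) : Fin (n + 1))) := by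
    rw [add_one_add_natCast_pred _ P.one_le]; exact hrm.2.1
  obtain ⟨t₁, ht₁, -, hlm₁, hW⟩ := exists_leftmostEdge_not_rightward_before hR hrm.2.2 hprev
  obtain ⟨t₀, -, ht₀, hlm, hS⟩ := exists_leftmostEdge_not_leftward_after hR hrm.2.2 hprev
  have hbetween : ∀ e, P.LeftmostEdge e → t₁ ≤ cpos (rm + 1) e ∧ cpos (rm + 1) e ≤ t₀ := by
    intro e he
    have hu := add_cpos (rm + 1) e
    have hun := cpos_le (rm + 1) e
    constructor
    · by_contra! h
      refine hW _ (Nat.succ_le_of_lt h) ?_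
      rw [add_natCast_add_one, hu]; exact he.2.2
    · by_contra! h
      refine hS (cpos (rm + 1) e - 1) (by omega) (by omega) ?_
      rw [Nat.cast_sub (by omega), Nat.cast_one, ← add_sub_assoc, hu]; exact he.2.1
  obtain ⟨hle₁, hle₁'⟩ := hbetween e₁ h₁
  obtain ⟨hle₂, hle₂'⟩ := hbetween e₂ h₂
  rcases (hle₁.trans hle₁').lt_or_eq with ht | ht
  · have ht' : t₁ + 1 < t₀ := by
      refine lt_of_le_of_ne ht fun h => hlm.1.1.not_rightward ?_
      rw [← h, add_natCast_add_one]; exact hlm₁.2.2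
    rcases le_or_gt (P.v (rm + 1 + t₀)).1 (P.v (rm + 1 + t₁)).1 with hx | hx
    · exact (false_of_leftmostEdge_lt_of_fst_le hL hrm hmin ht₁ ht' ht₀ hlm₁ hW hlm hS hx).elim
    · exact (false_of_leftmostEdge_lt_of_fst_lt hL hrm hmin ht₁ ht' ht₀ hlm₁ hW hlm hS hx).elim
  · rw [← add_cpos (rm + 1) e₁, ← add_cpos (rm + 1) e₂]
    congr 2
    omega

lemma not_leftward_add_of_le_cpos (hR : ∀ i, ¬ P.RightNotch i) {l r : Fin (n + 1)}
    (huniq : ∀ e, P.LeftmostEdge e → e = l) (hl : P.LeftmostEdge l) (hr : P.RightmostEdge r) :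
    ∀ t ≤ cpos l r, ¬ P.Leftward (l + t) := by
  intro t ht hleft
  have hlr := add_cpos l r
  rcases Nat.eq_zero_or_pos t with rfl | ht₀
  · exact hl.1.1.not_leftward (by simpa using hleft)
  rcases ht.lt_or_eq with ht | rfl
  · obtain ⟨s, -, hs, hls, -⟩ := exists_leftmostEdge_not_rightward_before hR hleft
      (d := cpos l r - 1 - t) (by
        rw [add_natCast_add_natCast, show t + (cpos l r - 1 - t) = cpos l r - 1 by omega,
          Nat.cast_sub (by omega), Nat.cast_one, ← add_sub_assoc, hlr]
        exact hr.2.1)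
    rw [add_natCast_add_natCast] at hls
    have := eq_zero_of_add_natCast_eq (by have := cpos_le l r; omega) (huniq _ hls)
    omega
  · exact hr.1.1.not_leftward (hlr ▸ hleft)

lemma not_rightward_sub_of_le_cpos (hR : ∀ i, ¬ P.RightNotch i) {l r : Fin (n + 1)}
    (huniq : ∀ e, P.LeftmostEdge e → e = l) (hl : P.LeftmostEdge l) (hr : P.RightmostEdge r) :
    ∀ t ≤ cpos r l, ¬ P.Rightward (l - t) := by
  intro t ht hright
  have hrl := add_cpos r l
  have hsub : l - t = r + ((cpos r l - t : ℕ) : Fin (n + 1)) := by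
    rw [Nat.cast_sub ht, ← add_sub_assoc, hrl]
  rw [hsub] at hright
  rcases Nat.eq_zero_or_pos (cpos r l - t) with h | h
  · exact hr.1.1.not_rightward (by simpa [h] using hright)
  rcases Nat.eq_zero_or_pos t with rfl | ht₀
  · exact hl.1.1.not_rightward (by simpa [hrl] using hright)
  have hshift : ∀ a : ℕ, r + 1 + (a : Fin (n + 1)) = r + ((a + 1 : ℕ) : Fin (n + 1)) := fun a => by
    push_cast; ring
  obtain ⟨s, -, hs, hls, -⟩ := exists_leftmostEdge_not_rightward_before hR hr.2.2
    (d := cpos r l - t - 1) (by rwa [hshift, Nat.sub_add_cancel h])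
  have h₁ := cpos_add (o := r) (a := s + 1) (by have := cpos_le r l; omega)
  rw [← hshift, huniq _ hls] at h₁
  omega

lemma xMinEdge_add_le_xMinEdge_add {o : Fin (n + 1)} {D : ℕ}
    (h : ∀ s ≤ D, ¬ P.Leftward (o + s)) {i j : ℕ} (hij : i ≤ j) (hj : j ≤ D) :
    P.xMinEdge (o + i) ≤ P.xMinEdge (o + j) := by
  have hx : ∀ s ≤ D, P.xMinEdge (o + s) = (P.v (o + s)).1 := fun s hs =>
    min_eq_left (fst_le_of_not_leftward (h s hs))
  rw [hx i (hij.trans hj), hx j hj]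
  exact fst_v_le_of_not_leftward (a := 0) (fun s _ hs => h s hs.le) (Nat.zero_le _) hij hj

lemma xMinEdge_sub_le_xMinEdge_sub {o : Fin (n + 1)} {D : ℕ}
    (h : ∀ s ≤ D, ¬ P.Rightward (o - s)) {i j : ℕ} (hij : i ≤ j) (hj : j ≤ D) :
    P.xMinEdge (o - i) ≤ P.xMinEdge (o - j) := by
  have hx : ∀ s ≤ D, P.xMinEdge (o - s) = (P.v (o - s + 1)).1 := fun s hs =>
    min_eq_right (fst_le_of_not_rightward (h s hs))
  rw [hx i (hij.trans hj), hx j hj]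
  induction j, hij using Nat.le_induction with
  | base => exact le_rfl
  | succ j hij ih =>
    refine (ih (by omega)).trans ?_
    rw [show o - ((j + 1 : ℕ) : Fin (n + 1)) + 1 = o - j by push_cast; ring]
    exact fst_le_of_not_rightward (h j (by omega))

end RectPolygon

open RectPolygon in
/-- In a nice hole, traversing the lower boundary `FB(S)` anticlockwise from the unique
leftmost edge `l` to the unique rightmost edge `r`, the edges are visited in
non-decreasing order of `x_min`; the same holds for the upper boundary `FT(S)`
traversed clockwise. -/
theorem nice_hole_boundary_x_sorted {n : ℕ} (P : RectPolygon n) (hP : P.Nice)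
    (l r : Fin (n + 1)) (hl : P.LeftmostEdge l) (hr : P.RightmostEdge r) :
    (∀ a b : Fin (n + 1),
      cpos a l ≤ cpos r l → cpos b l ≤ cpos r l →
      cpos a l ≤ cpos b l → P.xMinEdge a ≤ P.xMinEdge b) ∧
    (∀ a b : Fin (n + 1),
      cpos l a ≤ cpos l r → cpos l b ≤ cpos l r →
      cpos l a ≤ cpos l b → P.xMinEdge a ≤ P.xMinEdge b) := by
  have huniq : ∀ e, P.LeftmostEdge e → e = l := fun e he =>
    leftmostEdge_unique hP.2 hP.1.1 he hl
  refine ⟨fun a b _ hb hab => ?_, fun a b _ hb hab => ?_⟩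
  · have := xMinEdge_sub_le_xMinEdge_sub (not_rightward_sub_of_le_cpos hP.1.1 huniq hl hr) hab hb
    rwa [sub_cpos, sub_cpos] at this
  · have := xMinEdge_add_le_xMinEdge_add (not_leftward_add_of_le_cpos hP.1.1 huniq hl hr) hab hb
    rwa [add_cpos, add_cpos] at this
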